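/- arXiv:2401.06870 — 3 statements merged into one kernel-verified Lean document; each statement's English description precedes it below -/
import Mathlib

section
/- Let N ⊴ B₃ with N ≤ PB₃ of finite index and let (m,f) ∈ ℤ × [F₂,F₂]. Then (m,f) satisfies the hexagon relations modulo N if and only if f·θ(f) ∈ N ∩ F₂ and τ²(yᵐf)·τ(yᵐf)·yᵐf ∈ N ∩ F₂, where θ swaps x,y and τ(x) = y, τ(y) = y⁻¹x⁻¹. -/
def braidRel : Set (FreeGroup (Fin 2)) :=
  {FreeGroup.of 0 * FreeGroup.of 1 * FreeGroup.of 0 *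
    (FreeGroup.of 1 * FreeGroup.of 0 * FreeGroup.of 1)⁻¹}

/-- The Artin braid group on 3 strands. -/
abbrev B3 := PresentedGroup braidRel

def σ₁ : B3 := PresentedGroup.of 0
def σ₂ : B3 := PresentedGroup.of 1

/-- The standard projection B₃ → S₃. -/
def ρ : B3 →* Equiv.Perm (Fin 3) :=
  PresentedGroup.toGroup (f := ![Equiv.swap 0 1, Equiv.swap 1 2]) (by
    intro r hr
    simp only [braidRel, Set.mem_singleton_iff] at hr
    subst hr
    simp only [map_mul, map_inv, FreeGroup.lift_apply_of]
    decide)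

/-- The pure braid group on 3 strands. -/
def PB3 : Subgroup B3 := ρ.ker

def c : B3 := (σ₁ * σ₂ * σ₁) ^ 2

abbrev F2 := FreeGroup (Fin 2)
def xx : F2 := FreeGroup.of 0
def yy : F2 := FreeGroup.of 1

/-- The identification of F₂ with ⟨σ₁², σ₂²⟩ ≤ PB₃. -/
def ι : F2 →* B3 := FreeGroup.lift ![σ₁ ^ 2, σ₂ ^ 2]

/-- The pair (m, f) satisfies the two hexagon relations modulo N. -/
def Hex (N : Subgroup B3) [N.Normal] (m : ℤ) (f : F2) : Prop :=
  QuotientGroup.mk' N (σ₁ ^ (2 * m + 1) * (ι f)⁻¹ * σ₂ ^ (2 * m + 1) * ι f) =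
      QuotientGroup.mk' N ((ι f)⁻¹ * σ₁ * σ₂ * (σ₁ ^ 2) ^ (-m) * c ^ m) ∧
  QuotientGroup.mk' N ((ι f)⁻¹ * σ₂ ^ (2 * m + 1) * ι f * σ₁ ^ (2 * m + 1)) =
      QuotientGroup.mk' N (σ₂ * σ₁ * (σ₂ ^ 2) ^ (-m) * c ^ m * ι f)

/-- N_ord: the lcm of the orders of x₁₂N, x₂₃N and cN in B₃/N. -/
noncomputable def Nord (N : Subgroup B3) [N.Normal] : ℕ :=
  Nat.lcm
    (Nat.lcm (orderOf (QuotientGroup.mk' N (σ₁ ^ 2)))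
      (orderOf (QuotientGroup.mk' N (σ₂ ^ 2))))
    (orderOf (QuotientGroup.mk' N c))

/-- The endomorphism E_{m,f} of F₂. -/
def Emap (m : ℤ) (f : F2) : F2 →* F2 :=
  FreeGroup.lift ![xx ^ (2 * m + 1), f⁻¹ * yy ^ (2 * m + 1) * f]

/-- [m, f] is a GT-shadow with target N and kernel (source) K. -/
def IsShadow (K N : Subgroup B3) [N.Normal] (m : ℤ) (f : F2) : Prop :=
  Hex N m f ∧
  (∃ g ∈ commutator F2, g⁻¹ * f ∈ N.comap ι) ∧
  IsUnit ((2 * m + 1 : ℤ) : ZMod (Nord N)) ∧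
  ∃ T : B3 →* B3 ⧸ N,
    T σ₁ = QuotientGroup.mk' N (σ₁ ^ (2 * m + 1)) ∧
    T σ₂ = QuotientGroup.mk' N ((ι f)⁻¹ * σ₂ ^ (2 * m + 1) * ι f) ∧
    Function.Surjective T ∧
    T.ker = K

/-- [m, f] is a GT-shadow with target N (with unspecified source). -/
def IsShadowTgt (N : Subgroup B3) [N.Normal] (m : ℤ) (f : F2) : Prop :=
  ∃ K : Subgroup B3, IsShadow K N m f

/-- The swap automorphism θ of F₂. -/
def θ : F2 →* F2 := FreeGroup.lift ![yy, xx]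

/-- The automorphism τ of F₂ with τ(x) = y, τ(y) = y⁻¹x⁻¹. -/
def τ : F2 →* F2 := FreeGroup.lift ![yy, yy⁻¹ * xx⁻¹]

/-! In `B₃ ⧸ N` write `a, b` for the images of `σ₁, σ₂`, `Δ = aba`, `F` for the image of `ι f`
and `z` for that of `cᵐ`, which is central. Since `ι ∘ θ` is conjugation by `Δ` after `ι`, and
`ι ∘ τ` is conjugation by `ab` after `ι` up to a power of `c = Δ² = (ab)³` measured by the
exponent sum of `y`, the two simplified conditions become `ΔFΔ⁻¹ = F⁻¹` and
`(ab)² G (ab)⁻¹ G (ab)⁻¹ G = z` with `G = b²ᵐ F`. Given the first hexagon relation, the second one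
is equivalent to `ΔFΔ⁻¹ = F⁻¹`. Given `ΔFΔ⁻¹ = F⁻¹`, the word `(ab)² G (ab)⁻¹ G (ab)⁻¹ G` and `z`
arise from the two sides of the first hexagon relation by the same left and right
multiplications. -/

theorem map_mem_center_of_surjective {G H : Type*} [Group G] [Group H] {φ : G →* H}
    (hφ : Function.Surjective φ) {x : G} (hx : x ∈ Subgroup.center G) :
    φ x ∈ Subgroup.center H := by
  refine Subgroup.mem_center_iff.mpr fun h => ?_
  obtain ⟨g, rfl⟩ := hφ h
  rw [← map_mul, ← map_mul, Subgroup.mem_center_iff.mp hx]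

theorem mul_sq_zpow_neg {G : Type*} [Group G] (x y : G) (m : ℤ) :
    y * (x ^ 2) ^ (-m) = y * x * (x ^ (2 * m + 1))⁻¹ := by
  rw [← zpow_natCast, ← zpow_mul]
  group

theorem mul_conj_eq_one_iff_semiconjBy {G : Type*} [Group G] (g x : G) :
    x * (g * x * g⁻¹) = 1 ↔ SemiconjBy g x x⁻¹ := by
  rw [mul_eq_one_iff_inv_eq, eq_comm, mul_inv_eq_iff_eq_mul]
  rfl

section BraidRelation

variable {G : Type*} [Group G] {a b : G}

theorem semiconjBy_aba_left (h : a * b * a = b * a * b) : SemiconjBy (a * b * a) a b := by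
  rw [SemiconjBy, ← mul_assoc b, ← mul_assoc b, ← h]

theorem semiconjBy_aba_right (h : a * b * a = b * a * b) : SemiconjBy (a * b * a) b a :=
  calc a * b * a * b = a * (b * a * b) := by group
    _ = a * (a * b * a) := by rw [h]

theorem semiconjBy_ab (h : a * b * a = b * a * b) : SemiconjBy (a * b) a b := by
  rw [SemiconjBy, h, mul_assoc]

theorem commute_aba_sq_left (h : a * b * a = b * a * b) : Commute ((a * b * a) ^ 2) a :=
  sq (a * b * a) ▸ (semiconjBy_aba_right h).mul_left (semiconjBy_aba_left h)

theorem commute_aba_sq_right (h : a * b * a = b * a * b) : Commute ((a * b * a) ^ 2) b :=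
  sq (a * b * a) ▸ (semiconjBy_aba_left h).mul_left (semiconjBy_aba_right h)

theorem aba_sq_eq_ab_pow_three (h : a * b * a = b * a * b) : (a * b * a) ^ 2 = (a * b) ^ 3 := by
  rw [sq, pow_three]
  nth_rewrite 2 [h]
  group

theorem ab_mul_sq_mul_ab_inv (h : a * b * a = b * a * b) :
    (a * b) * b ^ 2 * (a * b)⁻¹ = (b ^ 2)⁻¹ * (a ^ 2)⁻¹ * (a * b * a) ^ 2 := by
  have hΔ : (a * b * a) * (a * b * a) = (a * a) * (b * (a * a) * b) :=
    calc (a * b * a) * (a * b * a) = (a * b * a) * (b * a * b) := by rw [h]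
      _ = a * (b * a * b) * (a * b) := by group
      _ = (a * a) * (b * (a * a) * b) := by rw [← h]; group
  simp only [sq]
  calc (a * b) * (b * b) * (a * b)⁻¹ = b⁻¹ * ((b * a * b) * b) * a⁻¹ := by group
    _ = b⁻¹ * (a * (a * b * a)) * a⁻¹ := by rw [← h, (semiconjBy_aba_right h).eq]
    _ = (b * b)⁻¹ * (a * a)⁻¹ * ((a * b * a) * (a * b * a)) := by rw [hΔ]; group

end BraidRelation

section HexagonEquations

variable {G : Type*} [Group G] {a b z : G}

theorem hex₂_iff_of_hex₁ (hbr : a * b * a = b * a * b) (hz : z ∈ Subgroup.center G) {n : ℤ}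
    {F : G} (h₁ : a ^ n * F⁻¹ * b ^ n * F = F⁻¹ * a * b * a * (a ^ n)⁻¹ * z) :
    F⁻¹ * b ^ n * F * a ^ n = b * a * b * (b ^ n)⁻¹ * z * F ↔ SemiconjBy (a * b * a) F F⁻¹ := by
  have hz' := Subgroup.mem_center_iff.mp hz
  have lhs : F⁻¹ * b ^ n * F * a ^ n = (a ^ n)⁻¹ * (F⁻¹ * (a * b * a)) * z :=
    calc F⁻¹ * b ^ n * F * a ^ n = (a ^ n)⁻¹ * (a ^ n * F⁻¹ * b ^ n * F) * a ^ n := by group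
      _ = (a ^ n)⁻¹ * (F⁻¹ * (a * b * a)) * (a ^ n)⁻¹ * (z * a ^ n) := by rw [h₁]; group
      _ = (a ^ n)⁻¹ * (F⁻¹ * (a * b * a)) * z := by rw [← hz']; group
  have rhs : b * a * b * (b ^ n)⁻¹ * z * F = (a ^ n)⁻¹ * ((a * b * a) * F) * z :=
    calc b * a * b * (b ^ n)⁻¹ * z * F = (a * b * a) * (b ^ n)⁻¹ * (z * F) := by rw [hbr]; group
      _ = (a ^ n)⁻¹ * ((a * b * a) * F) * z := by
        rw [← hz', ((semiconjBy_aba_right hbr).zpow_right n).inv_right.eq]; group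
  rw [lhs, rhs, mul_left_inj, mul_right_inj, eq_comm]
  rfl

theorem ab_inv_mul_zpow_sub_one_mul (hbr : a * b * a = b * a * b) (n : ℤ) {F : G}
    (hF : SemiconjBy (a * b * a) F F⁻¹) :
    (a * b)⁻¹ * (b ^ (n - 1) * F) = a ^ n * F⁻¹ * (a * b * a)⁻¹ := by
  have hF' : SemiconjBy (a * b * a)⁻¹ F F⁻¹ := by simpa using hF.inv_symm_left.inv_right
  calc (a * b)⁻¹ * (b ^ (n - 1) * F) = (b * a * b)⁻¹ * b ^ n * F := by group
    _ = a ^ n * ((a * b * a)⁻¹ * F) := by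
      rw [← hbr, ((semiconjBy_aba_left hbr).zpow_right n).inv_symm_left.eq]; group
    _ = a ^ n * F⁻¹ * (a * b * a)⁻¹ := by rw [hF'.eq]; group

theorem ab_cycle_word_eq_of_semiconjBy (hbr : a * b * a = b * a * b) (n : ℤ) {F : G}
    (hF : SemiconjBy (a * b * a) F F⁻¹) :
    (a * b) ^ 2 * (b ^ (n - 1) * F) * (a * b)⁻¹ * (b ^ (n - 1) * F) * (a * b)⁻¹ *
        (b ^ (n - 1) * F) =
      (a * b * a) ^ 2 * (a ^ n * F⁻¹ * (a * b * a)⁻¹) * (a ^ n * F⁻¹ * b ^ n * F) *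
        ((a * b * a) ^ 2)⁻¹ := by
  have hG := ab_inv_mul_zpow_sub_one_mul hbr n hF
  have hG₂ : (a * b) ^ 2 * (b ^ (n - 1) * F) = (a * b * a) ^ 2 * (a ^ n * F⁻¹ * (a * b * a)⁻¹) :=
    calc (a * b) ^ 2 * (b ^ (n - 1) * F)
      _ = (a * b) ^ 2 * (a * b) * ((a * b)⁻¹ * (b ^ (n - 1) * F)) := by
          rw [mul_assoc ((a * b) ^ 2), mul_inv_cancel_left]
      _ = _ := by rw [← pow_succ, ← aba_sq_eq_ab_pow_three hbr, hG]
  calc _ = (a * b) ^ 2 * (b ^ (n - 1) * F) * ((a * b)⁻¹ * (b ^ (n - 1) * F)) *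
        ((a * b)⁻¹ * (b ^ (n - 1) * F)) := by group
    _ = (a * b * a) ^ 2 * (a ^ n * F⁻¹ * (a * b * a)⁻¹) *
        (a ^ n * F⁻¹ * ((a * b * a)⁻¹ * a ^ n) * F⁻¹ * (a * b * a)⁻¹) := by
      rw [hG₂, hG]; group
    _ = (a * b * a) ^ 2 * (a ^ n * F⁻¹ * (a * b * a)⁻¹) *
        (a ^ n * F⁻¹ * b ^ n * ((a * b * a)⁻¹ * F⁻¹) * (a * b * a)⁻¹) := by
      rw [((semiconjBy_aba_right hbr).zpow_right n).inv_symm_left.eq]; group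
    _ = _ := by rw [hF.inv_symm_left.eq, sq]; group

theorem hex₁_iff_of_semiconjBy (hbr : a * b * a = b * a * b) (hz : z ∈ Subgroup.center G)
    {n : ℤ} {F : G} (hF : SemiconjBy (a * b * a) F F⁻¹) :
    a ^ n * F⁻¹ * b ^ n * F = F⁻¹ * a * b * a * (a ^ n)⁻¹ * z ↔
      (a * b) ^ 2 * (b ^ (n - 1) * F) * (a * b)⁻¹ * (b ^ (n - 1) * F) * (a * b)⁻¹ *
        (b ^ (n - 1) * F) = z := by
  have hz_eq : (a * b * a) ^ 2 * (a ^ n * F⁻¹ * (a * b * a)⁻¹) *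
      (F⁻¹ * a * b * a * (a ^ n)⁻¹ * z) * ((a * b * a) ^ 2)⁻¹ = z :=
    calc _ = (a * b * a) ^ 2 * (a ^ n * F⁻¹ * ((a * b * a)⁻¹ * F⁻¹) * (a * b * a) * (a ^ n)⁻¹) *
          (z * ((a * b * a) ^ 2)⁻¹) := by group
      _ = z := by rw [hF.inv_symm_left.eq, ← Subgroup.mem_center_iff.mp hz, sq]; group
  conv_rhs => rw [ab_cycle_word_eq_of_semiconjBy hbr n hF, ← hz_eq]
  rw [mul_left_inj, mul_right_inj]

theorem hexagon_iff_of_braid (hbr : a * b * a = b * a * b) (hz : z ∈ Subgroup.center G)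
    (n : ℤ) (F : G) :
    (a ^ n * F⁻¹ * b ^ n * F = F⁻¹ * a * b * a * (a ^ n)⁻¹ * z ∧
        F⁻¹ * b ^ n * F * a ^ n = b * a * b * (b ^ n)⁻¹ * z * F) ↔
      (SemiconjBy (a * b * a) F F⁻¹ ∧
        (a * b) ^ 2 * (b ^ (n - 1) * F) * (a * b)⁻¹ * (b ^ (n - 1) * F) * (a * b)⁻¹ *
          (b ^ (n - 1) * F) = z) := by
  constructor
  · rintro ⟨h₁, h₂⟩
    have hF := (hex₂_iff_of_hex₁ hbr hz h₁).1 h₂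
    exact ⟨hF, (hex₁_iff_of_semiconjBy hbr hz hF).1 h₁⟩
  · rintro ⟨hF, h⟩
    have h₁ := (hex₁_iff_of_semiconjBy hbr hz hF).2 h
    exact ⟨h₁, (hex₂_iff_of_hex₁ hbr hz h₁).2 hF⟩

end HexagonEquations

theorem σ₁_σ₂_braid : σ₁ * σ₂ * σ₁ = σ₂ * σ₁ * σ₂ :=
  mul_inv_eq_one.mp (PresentedGroup.one_of_mem (Set.mem_singleton _))

theorem c_mem_center : c ∈ Subgroup.center B3 := by
  refine Subgroup.mem_center_iff.mpr fun g => ?_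
  refine Subgroup.mem_centralizer_singleton_iff.mp
    (PresentedGroup.generated_by braidRel (Subgroup.centralizer {c}) (fun i => ?_) g)
  rw [Subgroup.mem_centralizer_singleton_iff]
  fin_cases i
  exacts [(commute_aba_sq_left σ₁_σ₂_braid).eq.symm, (commute_aba_sq_right σ₁_σ₂_braid).eq.symm]

theorem ι_θ (w : F2) : ι (θ w) = (σ₁ * σ₂ * σ₁) * ι w * (σ₁ * σ₂ * σ₁)⁻¹ := by
  suffices ι.comp θ = (MulAut.conj (σ₁ * σ₂ * σ₁)).toMonoidHom.comp ι from
    DFunLike.congr_fun this w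
  refine FreeGroup.ext_hom _ _ fun i => ?_
  fin_cases i
  · show σ₂ ^ 2 = (σ₁ * σ₂ * σ₁) * σ₁ ^ 2 * (σ₁ * σ₂ * σ₁)⁻¹
    exact (mul_inv_eq_of_eq_mul ((semiconjBy_aba_left σ₁_σ₂_braid).pow_right 2).eq).symm
  · show σ₁ ^ 2 = (σ₁ * σ₂ * σ₁) * σ₂ ^ 2 * (σ₁ * σ₂ * σ₁)⁻¹
    exact (mul_inv_eq_of_eq_mul ((semiconjBy_aba_right σ₁_σ₂_braid).pow_right 2).eq).symm

def yExpSum : F2 →* Multiplicative ℤ := FreeGroup.lift ![1, Multiplicative.ofAdd 1]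

theorem ι_τ (w : F2) :
    ι (τ w) = (σ₁ * σ₂) * ι w * (σ₁ * σ₂)⁻¹ * c ^ (-(yExpSum w).toAdd) := by
  have hc (k : ℤ) (g : B3) : g * c ^ k = c ^ k * g :=
    Subgroup.mem_center_iff.mp (Subgroup.zpow_mem _ c_mem_center k) g
  induction w using FreeGroup.induction_on with
  | C1 => simp
  | of i =>
    fin_cases i
    · show σ₂ ^ 2 = (σ₁ * σ₂) * σ₁ ^ 2 * (σ₁ * σ₂)⁻¹ * c ^ (-0 : ℤ)
      rw [neg_zero, zpow_zero, mul_one]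
      exact (mul_inv_eq_of_eq_mul ((semiconjBy_ab σ₁_σ₂_braid).pow_right 2).eq).symm
    · show (σ₂ ^ 2)⁻¹ * (σ₁ ^ 2)⁻¹ = (σ₁ * σ₂) * σ₂ ^ 2 * (σ₁ * σ₂)⁻¹ * c ^ (-1 : ℤ)
      rw [ab_mul_sq_mul_ab_inv σ₁_σ₂_braid, ← c]
      group
  | inv_of x ih =>
    rw [map_inv, map_inv, ih, map_inv, map_inv, toAdd_inv, neg_neg, hc]
    group
  | mul u v hu hv =>
    rw [map_mul, map_mul, hu, hv, map_mul, map_mul, toAdd_mul, mul_assoc _ (c ^ _), ← hc]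
    group

theorem toAdd_yExpSum_zpow_mul (m : ℤ) {f : F2} (hf : f ∈ commutator F2) :
    (yExpSum (yy ^ m * f)).toAdd = m := by
  rw [map_mul, map_zpow, Abelianization.commutator_subset_ker yExpSum hf, mul_one, toAdd_zpow]
  exact mul_one m

theorem toAdd_yExpSum_τ_zpow_mul (m : ℤ) {f : F2} (hf : f ∈ commutator F2) :
    (yExpSum (τ (yy ^ m * f))).toAdd = -m := by
  have hτf : yExpSum (τ f) = 1 := Abelianization.commutator_subset_ker (yExpSum.comp τ) hf
  rw [map_mul, map_mul, map_zpow, map_zpow, hτf, mul_one, toAdd_zpow]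
  exact mul_neg_one m

theorem ι_τ_cycle (m : ℤ) {f : F2} (hf : f ∈ commutator F2) :
    ι (τ (τ (yy ^ m * f)) * τ (yy ^ m * f) * (yy ^ m * f)) =
      (σ₁ * σ₂) ^ 2 * (σ₂ ^ (2 * m) * ι f) * (σ₁ * σ₂)⁻¹ * (σ₂ ^ (2 * m) * ι f) *
        (σ₁ * σ₂)⁻¹ * (σ₂ ^ (2 * m) * ι f) * (c ^ m)⁻¹ := by
  have hg : ι (yy ^ m * f) = σ₂ ^ (2 * m) * ι f := by
    rw [map_mul, map_zpow, zpow_mul]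
    rfl
  have hc (g : B3) : g * c ^ (-m) = c ^ (-m) * g :=
    Subgroup.mem_center_iff.mp (Subgroup.zpow_mem _ c_mem_center _) g
  rw [map_mul, map_mul, ι_τ (τ _), ι_τ (yy ^ m * f), toAdd_yExpSum_τ_zpow_mul m hf,
    toAdd_yExpSum_zpow_mul m hf, hg]
  calc _ = (σ₁ * σ₂) * (σ₁ * σ₂) * (σ₂ ^ (2 * m) * ι f) * (σ₁ * σ₂)⁻¹ * (c ^ (-m) * (σ₁ * σ₂)⁻¹) *
        c ^ m * (σ₁ * σ₂) * (σ₂ ^ (2 * m) * ι f) * (σ₁ * σ₂)⁻¹ *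
        (c ^ (-m) * (σ₂ ^ (2 * m) * ι f)) := by group
    _ = _ := by rw [← hc, ← hc, sq, zpow_neg]; group

theorem hexagon_iff_simplified_general (N : Subgroup B3) [N.Normal]
    (m : ℤ) (f : F2) (hf : f ∈ commutator F2) :
    Hex N m f ↔
      (f * θ f ∈ N.comap ι ∧
        τ (τ (yy ^ m * f)) * τ (yy ^ m * f) * (yy ^ m * f) ∈ N.comap ι) := by
  have mem_comap_iff (w : F2) : w ∈ N.comap ι ↔ QuotientGroup.mk' N (ι w) = 1 :=
    (QuotientGroup.eq_one_iff (ι w)).symm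
  have hbr := congrArg (QuotientGroup.mk' N) σ₁_σ₂_braid
  simp only [map_mul] at hbr
  have hz : QuotientGroup.mk' N c ^ m ∈ Subgroup.center (B3 ⧸ N) :=
    Subgroup.zpow_mem _
      (map_mem_center_of_surjective (QuotientGroup.mk'_surjective N) c_mem_center) m
  have key := hexagon_iff_of_braid hbr hz (2 * m + 1) (QuotientGroup.mk' N (ι f))
  rw [add_sub_cancel_right] at key
  rw [Hex, mem_comap_iff, mem_comap_iff, map_mul ι, ι_θ, ι_τ_cycle m hf]
  simp only [map_mul, map_inv, map_pow, map_zpow, mul_sq_zpow_neg, mul_conj_eq_one_iff_semiconjBy,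
    mul_inv_eq_one]
  exact key

/-- For (m,f) ∈ ℤ × [F₂,F₂], the hexagon relations modulo N are equivalent to
the simplified hexagon relations f θ(f) ∈ N ∩ F₂ and
τ²(yᵐf)·τ(yᵐf)·yᵐf ∈ N ∩ F₂. -/
theorem hexagon_iff_simplified (N : Subgroup B3) [N.Normal] (hfin : N.FiniteIndex)
    (hle : N ≤ PB3) (m : ℤ) (f : F2) (hf : f ∈ commutator F2) :
    Hex N m f ↔
      (f * θ f ∈ N.comap ι ∧
        τ (τ (yy ^ m * f)) * τ (yy ^ m * f) * (yy ^ m * f) ∈ N.comap ι) :=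
  hexagon_iff_simplified_general N m f hf
end

section
/- GT-shadows form a groupoid GTSh: objects are finite-index normal subgroups of B₃ contained in PB₃; morphisms from K to N are GT-shadows [m,f] with target N and ker(T_{m,f}) = K; composition is [m₁,f₁]∘[m₂,f₂] = [2m₁m₂+m₁+m₂, f₁E_{m₁,f₁}(f₂)]; the identity at N is [0,1]; and every morphism [m,f] ∈ GTSh(K,N) has an inverse [m̃,f̃] ∈ GTSh(N,K) determined by (2m+1)(2m̃+1) ≡ 1 mod 2N_ord and T^{F₂,isom}_{m,f}(f̃ K_{F₂}) = f⁻¹N_{F₂}. -/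
section GroupLemmas

open scoped commutatorElement

variable {G : Type*} [Group G]

theorem inv_mul_mul_zpow (a b : G) (k : ℤ) : (a⁻¹ * b * a) ^ k = a⁻¹ * b ^ k * a := by
  simpa using conj_zpow (a := a⁻¹) (b := b) (i := k)

theorem orderOf_inv_mul_mul (a b : G) : orderOf (a⁻¹ * b * a) = orderOf b := by
  simpa using ((SemiconjBy.conj_mk a⁻¹ b).orderOf_eq).symm

theorem orderOf_zpow_of_isCoprime {a : G} {k : ℤ} (hk : IsCoprime (orderOf a : ℤ) k) :
    orderOf (a ^ k) = orderOf a := by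
  refine Nat.dvd_antisymm (orderOf_dvd_of_mem_zpowers (Subgroup.zpow_mem_zpowers a k)) ?_
  obtain ⟨u, v, huv⟩ := hk
  refine orderOf_dvd_of_mem_zpowers ⟨v, ?_⟩
  have hu : a ^ (u * orderOf a) = 1 := by
    rw [mul_comm, zpow_mul, zpow_natCast, pow_orderOf_eq_one, one_zpow]
  calc (a ^ k) ^ v = a ^ (u * orderOf a) * a ^ (v * k) := by rw [hu, one_mul, ← zpow_mul, mul_comm]
    _ = a := by rw [← zpow_add, huv, zpow_one]

theorem orderOf_zpow_of_isUnit {a : G} {n : ℕ} (ha : orderOf a ∣ n) {k : ℤ}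
    (hk : IsUnit (k : ZMod n)) : orderOf (a ^ k) = orderOf a :=
  orderOf_zpow_of_isCoprime <| ((ZMod.coe_int_isUnit_iff_isCoprime k n).mp hk)
    |>.of_isCoprime_of_dvd_left (Int.natCast_dvd_natCast.mpr ha)

theorem zpow_eq_self_of_orderOf_sq_dvd {a : G} {n : ℕ} (ha : orderOf (a ^ 2) ∣ n) {P : ℤ}
    (hP : 2 * (n : ℤ) ∣ P - 1) : a ^ P = a := by
  obtain ⟨t, ht⟩ := hP
  have hone : (a ^ 2) ^ ((n : ℤ) * t) = 1 :=
    orderOf_dvd_iff_zpow_eq_one.mp (dvd_mul_of_dvd_left (Int.natCast_dvd_natCast.mpr ha) t)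
  calc a ^ P = a * (a ^ 2) ^ ((n : ℤ) * t) := by
        rw [← zpow_natCast, ← zpow_mul, ← zpow_one_add]; congr 1; push_cast; linarith
    _ = a := by rw [hone, mul_one]

theorem commutatorElement_mul_of_mem_center {a b z : G} (hz : z ∈ Subgroup.center G) :
    ⁅a * z, b⁆ = ⁅a, b⁆ := by
  have hconj : z * b * z⁻¹ = b := by rw [← Subgroup.mem_center_iff.mp hz b, mul_inv_cancel_right]
  calc ⁅a * z, b⁆ = a * (z * b * z⁻¹) * a⁻¹ * b⁻¹ := by simp only [commutatorElement_def]; group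
    _ = ⁅a, b⁆ := by rw [hconj, commutatorElement_def]

theorem commutator_sup_eq_of_le_center {H Z : Subgroup G} (hZ : Z ≤ Subgroup.center G) :
    ⁅H ⊔ Z, H ⊔ Z⁆ = ⁅H, H⁆ := by
  have : Z.Normal :=
    ⟨fun n hn g => by rw [Subgroup.mem_center_iff.mp (hZ hn) g, mul_inv_cancel_right]; exact hn⟩
  refine le_antisymm (Subgroup.commutator_le.mpr fun a ha b hb => ?_)
    (Subgroup.commutator_mono le_sup_left le_sup_left)
  obtain ⟨h, hh, z, hz, rfl⟩ := Subgroup.mem_sup_of_normal_right.mp ha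
  obtain ⟨h', hh', z', hz', rfl⟩ := Subgroup.mem_sup_of_normal_right.mp hb
  rw [commutatorElement_mul_of_mem_center (hZ hz), ← commutatorElement_inv,
    commutatorElement_mul_of_mem_center (hZ hz'), commutatorElement_inv]
  exact Subgroup.commutator_mem_commutator hh hh'

theorem exists_mem_and_inv_mul_mem_iff {C L : Subgroup G} [L.Normal] {f : G} :
    (∃ g ∈ C, g⁻¹ * f ∈ L) ↔ f ∈ C ⊔ L := by
  rw [Subgroup.mem_sup_of_normal_right]
  exact ⟨fun ⟨g, hg, hl⟩ => ⟨g, hg, _, hl, mul_inv_cancel_left g f⟩,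
    fun ⟨g, hg, l, hl, hf⟩ => ⟨g, hg, by rwa [← hf, inv_mul_cancel_left]⟩⟩

section Quotient

open QuotientGroup

variable {G' H : Type*} [Group G'] [Group H]

theorem orderOf_mk'_eq {K : Subgroup G} [K.Normal] {φ : G →* H} (hK : φ.ker = K) (x : G) :
    orderOf (mk' K x) = orderOf (φ x) :=
  (orderOf_injective _ ((injective_lift_iff K φ hK.ge).mpr hK.symm) _).symm

theorem lift_comp_apply_of_eq_mk' {M : Subgroup G} [M.Normal] {φ : G →* H} {ψ : G' →* G ⧸ M}
    (hM : M ≤ φ.ker) {x : G'} {y : G} (h : ψ x = mk' M y) : (lift M φ hM).comp ψ x = φ y := by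
  rw [MonoidHom.comp_apply, h]; rfl

variable {K N : Subgroup G} [K.Normal] [N.Normal] {T : G →* G ⧸ N}

/-- The homomorphism of the inverse GT-shadow. -/
noncomputable def quotientInvHom (hsurj : Function.Surjective T) (hker : T.ker = K) :
    G →* G ⧸ K :=
  ((liftEquiv K hsurj hker.symm).symm : G ⧸ N →* G ⧸ K).comp (mk' N)

variable (hsurj : Function.Surjective T) (hker : T.ker = K)

theorem quotientInvHom_apply_eq_mk'_iff {x y : G} :
    quotientInvHom hsurj hker x = mk' K y ↔ mk' N x = T y :=
  MulEquiv.symm_apply_eq (liftEquiv K hsurj hker.symm)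

theorem quotientInvHom_surjective : Function.Surjective (quotientInvHom hsurj hker) :=
  ((liftEquiv K hsurj hker.symm).symm.surjective.comp (mk'_surjective N) :)

theorem ker_quotientInvHom : (quotientInvHom hsurj hker).ker = N := by
  rw [quotientInvHom, MonoidHom.ker_mulEquiv_comp, ker_mk']

end Quotient

end GroupLemmas

theorem exists_mul_two_mul_add_one_sub_one_dvd {n : ℕ} {m : ℤ}
    (hu : IsUnit ((2 * m + 1 : ℤ) : ZMod n)) :
    ∃ m' : ℤ, 2 * (n : ℤ) ∣ (2 * m + 1) * (2 * m' + 1) - 1 := by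
  have h2 : IsCoprime (2 : ℤ) (2 * m + 1) := ⟨-m, 1, by ring⟩
  obtain ⟨u, v, huv⟩ := h2.mul_left ((ZMod.coe_int_isUnit_iff_isCoprime _ n).mp hu)
  -- `u * 2n + v * (2m + 1) = 1` forces `v` odd; take `2m' + 1 = v`.
  exact ⟨-(n * u) - m * v, -u, by linear_combination (-2 * m) * huv⟩

section Braid

local notation "Δ" => σ₁ * σ₂ * σ₁

theorem braid_relation : Δ = σ₂ * σ₁ * σ₂ :=
  PresentedGroup.mk_eq_mk_of_mul_inv_mem rfl

theorem semiconjBy_Δ_σ₁ : SemiconjBy Δ σ₁ σ₂ := by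
  rw [SemiconjBy]; conv_lhs => rw [braid_relation]
  group

theorem semiconjBy_Δ_σ₂ : SemiconjBy Δ σ₂ σ₁ := by
  rw [SemiconjBy]; conv_rhs => rw [braid_relation]
  group

theorem c_eq : c = Δ * Δ := sq _

theorem c_commute (g : B3) : Commute c g := by
  suffices g ∈ Subgroup.centralizer {c} from (Subgroup.mem_centralizer_singleton_iff.mp this).symm
  refine PresentedGroup.generated_by _ _ (fun j => ?_) g
  rw [Subgroup.mem_centralizer_singleton_iff, c_eq]
  fin_cases j
  · exact (semiconjBy_Δ_σ₂.mul_left semiconjBy_Δ_σ₁).symm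
  · exact (semiconjBy_Δ_σ₁.mul_left semiconjBy_Δ_σ₂).symm

theorem Δ_mul_σ₁_zpow_mul_Δ (k : ℤ) : Δ * σ₁ ^ k * Δ = c * σ₂ ^ k := by
  rw [(semiconjBy_Δ_σ₁.zpow_right k).eq, mul_assoc, ← c_eq, (c_commute _).eq]

theorem inv_pow_mul_c_zpow (x : B3) (k : ℤ) : (x ^ 2)⁻¹ ^ k * c ^ k = ((x ^ 2)⁻¹ * c) ^ k :=
  ((c_commute _).symm.mul_zpow k).symm

theorem σ₁_σ₂_mul_zpow_mul_σ₂_σ₁_mul_zpow (k : ℤ) :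
    σ₁ * σ₂ * ((σ₁ ^ 2)⁻¹ * c) ^ k * (σ₁ ^ 2) ^ (2 * k + 1) * (σ₂ * σ₁ * ((σ₂ ^ 2)⁻¹ * c) ^ k) =
      c ^ (2 * k + 1) := by
  simp only [← inv_pow_mul_c_zpow]
  calc _ = σ₁ * σ₂ * (σ₁ ^ 2)⁻¹ ^ k *
          (c ^ k * ((σ₁ ^ 2) ^ (2 * k + 1) * (σ₂ * σ₁) * (σ₂ ^ 2)⁻¹ ^ k)) * c ^ k := by
        group
    _ = Δ * σ₁ ^ (2 * k) * Δ * σ₂ ^ (-(2 * k)) * (c ^ k * c ^ k) := by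
        rw [((c_commute _).zpow_left k).eq]; group
    _ = c ^ (2 * k + 1) := by rw [Δ_mul_σ₁_zpow_mul_Δ]; group

theorem ρ_σ₁ : ρ σ₁ = Equiv.swap 0 1 := PresentedGroup.toGroup.of _

theorem ρ_σ₂ : ρ σ₂ = Equiv.swap 1 2 := PresentedGroup.toGroup.of _

theorem ι_xx : ι xx = σ₁ ^ 2 := FreeGroup.lift_apply_of ..

theorem ι_yy : ι yy = σ₂ ^ 2 := FreeGroup.lift_apply_of ..

theorem ι_mem_PB3 (w : F2) : ι w ∈ PB3 := by
  suffices ρ.comp ι = 1 from DFunLike.congr_fun this w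
  refine FreeGroup.ext_hom _ _ fun i => ?_
  fin_cases i
  · show ρ (ι xx) = 1
    rw [ι_xx, map_pow, ρ_σ₁]; decide
  · show ρ (ι yy) = 1
    rw [ι_yy, map_pow, ρ_σ₂]; decide

theorem c_mem_PB3 : c ∈ PB3 := by
  simp only [PB3, MonoidHom.mem_ker, c, map_pow, map_mul, ρ_σ₁, ρ_σ₂]
  decide

theorem ρ_zpow_two_mul_add_one {x : B3} (hx : x ^ 2 ∈ PB3) (m : ℤ) :
    ρ (x ^ (2 * m + 1)) = ρ x := by
  rw [zpow_add_one, zpow_mul, map_mul, map_zpow, zpow_ofNat, hx, one_zpow, one_mul]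

local notation "H₀" => ι.range ⊔ Subgroup.zpowers c

theorem σ₁_sq_mem_H₀ : σ₁ ^ 2 ∈ H₀ := Subgroup.mem_sup_left ⟨xx, ι_xx⟩

theorem σ₂_sq_mem_H₀ : σ₂ ^ 2 ∈ H₀ := Subgroup.mem_sup_left ⟨yy, ι_yy⟩

theorem c_mem_H₀ : c ∈ H₀ := Subgroup.mem_sup_right (Subgroup.mem_zpowers c)

theorem σ₂_mul_σ₁_sq_mul_σ₂_inv_mem_H₀ : σ₂ * σ₁ ^ 2 * σ₂⁻¹ ∈ H₀ := by
  have : σ₂ * σ₁ ^ 2 * σ₂⁻¹ = c * (σ₁ ^ 2)⁻¹ * (σ₂ ^ 2)⁻¹ := by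
    rw [← inv_mul_cancel_left σ₁ c, ← (c_commute σ₁).eq, c_eq, sq, sq]
    group
  rw [this]
  exact mul_mem (mul_mem c_mem_H₀ (inv_mem σ₁_sq_mem_H₀)) (inv_mem σ₂_sq_mem_H₀)

theorem σ₁_mul_σ₂_sq_mul_σ₁_inv_mem_H₀ : σ₁ * σ₂ ^ 2 * σ₁⁻¹ ∈ H₀ := by
  have : σ₁ * σ₂ ^ 2 * σ₁⁻¹ = c * (σ₂ ^ 2)⁻¹ * (σ₁ ^ 2)⁻¹ := by
    rw [← inv_mul_cancel_left σ₂ c, ← (c_commute σ₂).eq, c_eq, braid_relation, sq, sq]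
    group
  rw [this]
  exact mul_mem (mul_mem c_mem_H₀ (inv_mem σ₂_sq_mem_H₀)) (inv_mem σ₁_sq_mem_H₀)

-- Representatives of the right cosets of `H₀`; `ρ` maps them bijectively onto `S₃`.
local notation "R₀" => ({1, σ₁, σ₂, σ₁ * σ₂, σ₂ * σ₁, Δ} : Set B3)

theorem exists_rep_mul_inv_mem_of_rep_mul_σ {t s : B3} (ht : t ∈ R₀)
    (hs : s ∈ ({σ₁, σ₂} : Set B3)) :
    ∃ t' ∈ R₀, t * s * t'⁻¹ ∈ H₀ := by
  simp only [Set.mem_insert_iff, Set.mem_singleton_iff] at ht hs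
  rcases hs with rfl | rfl <;> rcases ht with rfl | rfl | rfl | rfl | rfl | rfl
  · exact ⟨σ₁, by simp, by simp⟩
  · exact ⟨1, by simp, by simpa [sq] using σ₁_sq_mem_H₀⟩
  · exact ⟨σ₂ * σ₁, by simp, by simp⟩
  · exact ⟨Δ, by simp, by simp⟩
  · exact ⟨σ₂, by simp, by simpa [sq, mul_assoc] using σ₂_mul_σ₁_sq_mul_σ₂_inv_mem_H₀⟩
  · refine ⟨σ₁ * σ₂, by simp, ?_⟩
    rw [semiconjBy_Δ_σ₁.eq, braid_relation]
    convert σ₂_sq_mem_H₀ using 1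
    rw [sq]; group
  · exact ⟨σ₂, by simp, by simp⟩
  · exact ⟨σ₁ * σ₂, by simp, by simp⟩
  · exact ⟨1, by simp, by simpa [sq] using σ₂_sq_mem_H₀⟩
  · exact ⟨σ₁, by simp, by simpa [sq, mul_assoc] using σ₁_mul_σ₂_sq_mul_σ₁_inv_mem_H₀⟩
  · exact ⟨Δ, by simp, by simp [braid_relation]⟩
  · refine ⟨σ₂ * σ₁, by simp, ?_⟩
    rw [semiconjBy_Δ_σ₂.eq]
    convert σ₁_sq_mem_H₀ using 1
    rw [sq]; group

theorem exists_rep_mul_σ_mul_inv_mem {g s : B3} (hg : ∃ t ∈ R₀, g * t⁻¹ ∈ H₀)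
    (hs : s ∈ ({σ₁, σ₂} : Set B3)) : ∃ t ∈ R₀, g * s * t⁻¹ ∈ H₀ := by
  obtain ⟨t, ht, hgt⟩ := hg
  obtain ⟨t', ht', hts⟩ := exists_rep_mul_inv_mem_of_rep_mul_σ ht hs
  exact ⟨t', ht', by simpa [mul_assoc] using mul_mem hgt hts⟩

theorem exists_rep_mul_c_inv_mul_inv_mem {g : B3} (hg : ∃ t ∈ R₀, g * t⁻¹ ∈ H₀) :
    ∃ t ∈ R₀, g * c⁻¹ * t⁻¹ ∈ H₀ := by
  obtain ⟨t, ht, hgt⟩ := hg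
  refine ⟨t, ht, ?_⟩
  rw [mul_assoc, (c_commute _).inv_left.eq, ← mul_assoc]
  exact mul_mem hgt (inv_mem c_mem_H₀)

theorem σ₁_inv_eq : σ₁⁻¹ = c⁻¹ * Δ * (σ₁ * σ₂) := by
  rw [c_eq]; group

theorem σ₂_inv_eq : σ₂⁻¹ = c⁻¹ * Δ * (σ₂ * σ₁) := by
  rw [c_eq, braid_relation]; group

theorem exists_rep_mul_inv_mem (g : B3) : ∃ t ∈ R₀, g * t⁻¹ ∈ H₀ := by
  have hg : g ∈ Subgroup.closure ({σ₁, σ₂} : Set B3) := by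
    rw [show ({σ₁, σ₂} : Set B3) = Set.range PresentedGroup.of by
      ext; simp [Fin.exists_fin_two, σ₁, σ₂, eq_comm], PresentedGroup.closure_range_of]
    exact Subgroup.mem_top g
  induction hg using Subgroup.closure_induction_right with
  | one => exact ⟨1, by simp, by simp⟩
  | mul_right x _ s hs ih => exact exists_rep_mul_σ_mul_inv_mem ih hs
  | mul_inv_cancel x _ s hs ih =>
    -- `σᵢ⁻¹` is `c⁻¹` times a positive word, and `c` is central.
    have h₀ := exists_rep_mul_c_inv_mul_inv_mem ih
    rcases hs with rfl | rfl
    · simp only [σ₁_inv_eq, ← mul_assoc]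
      exact exists_rep_mul_σ_mul_inv_mem (exists_rep_mul_σ_mul_inv_mem
        (exists_rep_mul_σ_mul_inv_mem (exists_rep_mul_σ_mul_inv_mem
          (exists_rep_mul_σ_mul_inv_mem h₀ (by simp)) (by simp)) (by simp)) (by simp)) (by simp)
    · simp only [σ₂_inv_eq, ← mul_assoc]
      exact exists_rep_mul_σ_mul_inv_mem (exists_rep_mul_σ_mul_inv_mem
        (exists_rep_mul_σ_mul_inv_mem (exists_rep_mul_σ_mul_inv_mem
          (exists_rep_mul_σ_mul_inv_mem h₀ (by simp)) (by simp)) (by simp)) (by simp)) (by simp)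

theorem sup_le_PB3 : H₀ ≤ PB3 :=
  sup_le (by rintro _ ⟨w, rfl⟩; exact ι_mem_PB3 w) (Subgroup.zpowers_le.mpr c_mem_PB3)

theorem eq_one_of_rep_mem_PB3 {t : B3} (ht : t ∈ R₀) (hρ : t ∈ PB3) : t = 1 := by
  simp only [Set.mem_insert_iff, Set.mem_singleton_iff] at ht
  rcases ht with rfl | rfl | rfl | rfl | rfl | rfl <;>
    first
    | rfl
    | exact absurd hρ (by simp only [PB3, MonoidHom.mem_ker, map_mul, ρ_σ₁, ρ_σ₂]; decide)

theorem PB3_eq_sup : PB3 = H₀ := by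
  refine le_antisymm (fun g hg => ?_) sup_le_PB3
  obtain ⟨t, ht, hgt⟩ := exists_rep_mul_inv_mem g
  have htP : t ∈ PB3 := by simpa using mul_mem (inv_mem (sup_le_PB3 hgt)) hg
  simpa [eq_one_of_rep_mem_PB3 ht htP] using hgt

end Braid

theorem commutator_map_PB3 {G : Type*} [Group G] {φ : B3 →* G} (hφ : Function.Surjective φ) :
    ⁅PB3.map φ, PB3.map φ⁆ = (commutator F2).map (φ.comp ι) := by
  have hc : Subgroup.zpowers (φ c) ≤ Subgroup.center G := by
    refine Subgroup.zpowers_le.mpr (Subgroup.mem_center_iff.mpr fun g => ?_)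
    obtain ⟨x, rfl⟩ := hφ g
    rw [← map_mul, ← map_mul, (c_commute x).eq]
  rw [PB3_eq_sup, Subgroup.map_sup, MonoidHom.map_range, MonoidHom.map_zpowers,
    commutator_sup_eq_of_le_center hc, map_commutator_eq]

theorem emap_xx (m : ℤ) (f : F2) : Emap m f xx = xx ^ (2 * m + 1) := FreeGroup.lift_apply_of ..

theorem emap_yy (m : ℤ) (f : F2) : Emap m f yy = f⁻¹ * yy ^ (2 * m + 1) * f :=
  FreeGroup.lift_apply_of ..

section Nord

open QuotientGroup

variable (N : Subgroup B3) [N.Normal]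

theorem orderOf_σ₁_sq_dvd_nord : orderOf (mk' N (σ₁ ^ 2)) ∣ Nord N :=
  (Nat.dvd_lcm_left _ _).trans (Nat.dvd_lcm_left _ _)

theorem orderOf_σ₂_sq_dvd_nord : orderOf (mk' N (σ₂ ^ 2)) ∣ Nord N :=
  (Nat.dvd_lcm_right _ _).trans (Nat.dvd_lcm_left _ _)

theorem orderOf_c_dvd_nord : orderOf (mk' N c) ∣ Nord N := Nat.dvd_lcm_right _ _

theorem orderOf_sq_inv_mul_c_dvd_nord {x : B3} (hx : orderOf (mk' N (x ^ 2)) ∣ Nord N) :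
    orderOf (mk' N ((x ^ 2)⁻¹ * c)) ∣ Nord N := by
  rw [map_mul, map_inv]
  exact ((c_commute _).map (mk' N)).symm.inv_left.orderOf_mul_dvd_lcm.trans
    (Nat.lcm_dvd (by rwa [orderOf_inv]) (orderOf_c_dvd_nord N))

end Nord

/-- `T` is the homomorphism `T_{m,f}` of the GT-shadow `[m, f]` with target `N`. -/
def IsTmf (N : Subgroup B3) [N.Normal] (m : ℤ) (f : F2) (T : B3 →* B3 ⧸ N) : Prop :=
  T σ₁ = QuotientGroup.mk' N (σ₁ ^ (2 * m + 1)) ∧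
  T σ₂ = QuotientGroup.mk' N ((ι f)⁻¹ * σ₂ ^ (2 * m + 1) * ι f)

namespace IsTmf

open QuotientGroup

variable {K N : Subgroup B3} [K.Normal] [N.Normal] {m m' : ℤ} {f f' : F2} {T : B3 →* B3 ⧸ N}

theorem map_ι (hT : IsTmf N m f T) (w : F2) : T (ι w) = mk' N (ι (Emap m f w)) := by
  suffices T.comp ι = ((mk' N).comp ι).comp (Emap m f) from DFunLike.congr_fun this w
  refine FreeGroup.ext_hom _ _ fun i => ?_
  fin_cases i
  · show T (ι xx) = mk' N (ι (Emap m f xx))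
    rw [emap_xx, map_zpow, ι_xx, map_pow, hT.1, ← map_pow, ← zpow_natCast, ← zpow_mul,
      ← zpow_natCast, ← zpow_mul, mul_comm]
  · show T (ι yy) = mk' N (ι (Emap m f yy))
    rw [emap_yy, map_mul ι, map_mul ι, map_inv ι, map_zpow ι, ι_yy, map_pow, hT.2, ← map_pow]
    congr 1
    rw [sq, ← zpow_natCast σ₂ 2, ← zpow_mul]; group

theorem map_σ₁_sq (hT : IsTmf N m f T) : T (σ₁ ^ 2) = mk' N ((σ₁ ^ 2) ^ (2 * m + 1)) := by
  rw [← ι_xx, hT.map_ι, emap_xx, map_zpow]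

theorem map_σ₂_sq (hT : IsTmf N m f T) :
    T (σ₂ ^ 2) = mk' N ((ι f)⁻¹ * (σ₂ ^ 2) ^ (2 * m + 1) * ι f) := by
  rw [← ι_yy, hT.map_ι, emap_yy, map_mul ι, map_mul ι, map_inv ι, map_zpow ι]

theorem hex_iff (hT : IsTmf N m f T) :
    Hex N m f ↔
      T (σ₁ * σ₂) = mk' N ((ι f)⁻¹ * σ₁ * σ₂ * ((σ₁ ^ 2)⁻¹ * c) ^ m) ∧
      T (σ₂ * σ₁) = mk' N (σ₂ * σ₁ * ((σ₂ ^ 2)⁻¹ * c) ^ m * ι f) := by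
  rw [Hex, map_mul T, map_mul T, hT.1, hT.2, ← map_mul, ← map_mul, zpow_neg, ← inv_zpow,
    zpow_neg, ← inv_zpow]
  simp only [mul_assoc, inv_pow_mul_c_zpow]

theorem map_c (hT : IsTmf N m f T) (hex : Hex N m f) : T c = mk' N (c ^ (2 * m + 1)) := by
  obtain ⟨h₁₂, h₂₁⟩ := hT.hex_iff.mp hex
  have hc : c = σ₁ * σ₂ * σ₁ ^ 2 * (σ₂ * σ₁) := by rw [c_eq, sq]; group
  rw [hc, map_mul T, map_mul T, h₁₂, h₂₁, hT.map_σ₁_sq, ← map_mul, ← map_mul]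
  congr 1
  calc _ = (ι f)⁻¹ * (σ₁ * σ₂ * ((σ₁ ^ 2)⁻¹ * c) ^ m * (σ₁ ^ 2) ^ (2 * m + 1) *
        (σ₂ * σ₁ * ((σ₂ ^ 2)⁻¹ * c) ^ m)) * ι f := by group
    _ = c ^ (2 * m + 1) := by
        rw [σ₁_σ₂_mul_zpow_mul_σ₂_σ₁_mul_zpow, mul_assoc, ((c_commute _).zpow_left _).eq]
        group

theorem map_σ₁_sq_inv_mul_c (hT : IsTmf N m f T) (hex : Hex N m f) :
    T ((σ₁ ^ 2)⁻¹ * c) = mk' N (((σ₁ ^ 2)⁻¹ * c) ^ (2 * m + 1)) := by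
  rw [map_mul, map_inv, hT.map_σ₁_sq, hT.map_c hex, ← map_inv, ← map_mul, ← inv_zpow,
    inv_pow_mul_c_zpow]

theorem map_σ₂_sq_inv_mul_c (hT : IsTmf N m f T) (hex : Hex N m f) :
    T ((σ₂ ^ 2)⁻¹ * c) = mk' N ((ι f)⁻¹ * ((σ₂ ^ 2)⁻¹ * c) ^ (2 * m + 1) * ι f) := by
  rw [map_mul, map_inv, hT.map_σ₂_sq, hT.map_c hex, ← map_inv, ← map_mul, ← inv_pow_mul_c_zpow]
  congr 1
  calc _ = (ι f)⁻¹ * ((σ₂ ^ 2) ^ (2 * m + 1))⁻¹ * (ι f * c ^ (2 * m + 1)) := by group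
    _ = _ := by rw [← ((c_commute _).zpow_left _).eq]; group

theorem nord_eq (hT : IsTmf N m f T) (hex : Hex N m f) (hker : T.ker = K)
    (hu : IsUnit ((2 * m + 1 : ℤ) : ZMod (Nord N))) : Nord K = Nord N := by
  have h₁ : orderOf (mk' K (σ₁ ^ 2)) = orderOf (mk' N (σ₁ ^ 2)) := by
    rw [orderOf_mk'_eq hker, hT.map_σ₁_sq, map_zpow,
      orderOf_zpow_of_isUnit (orderOf_σ₁_sq_dvd_nord N) hu]
  have h₂ : orderOf (mk' K (σ₂ ^ 2)) = orderOf (mk' N (σ₂ ^ 2)) := by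
    rw [orderOf_mk'_eq hker, hT.map_σ₂_sq, map_mul, map_mul, map_inv, orderOf_inv_mul_mul,
      map_zpow, orderOf_zpow_of_isUnit (orderOf_σ₂_sq_dvd_nord N) hu]
  have hc : orderOf (mk' K c) = orderOf (mk' N c) := by
    rw [orderOf_mk'_eq hker, hT.map_c hex, map_zpow,
      orderOf_zpow_of_isUnit (orderOf_c_dvd_nord N) hu]
  rw [Nord, Nord, h₁, h₂, hc]

theorem comp {N₁ N₂ : Subgroup B3} [N₁.Normal] [N₂.Normal] {m₁ m₂ : ℤ} {f₁ f₂ : F2}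
    {T₁ : B3 →* B3 ⧸ N₁} {T₂ : B3 →* B3 ⧸ N₂} (hT₁ : IsTmf N₁ m₁ f₁ T₁) (hK : T₁.ker = N₂)
    (hT₂ : IsTmf N₂ m₂ f₂ T₂) :
    IsTmf N₁ (2 * m₁ * m₂ + m₁ + m₂) (f₁ * Emap m₁ f₁ f₂) ((lift N₂ T₁ hK.ge).comp T₂) := by
  constructor
  · rw [lift_comp_apply_of_eq_mk' _ hT₂.1, map_zpow, hT₁.1, ← map_zpow, ← zpow_mul]
    congr 2; ring
  · rw [lift_comp_apply_of_eq_mk' _ hT₂.2, map_mul, map_mul, map_inv, map_zpow, hT₁.2,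
      hT₁.map_ι, ← map_zpow, ← map_inv, ← map_mul, ← map_mul, map_mul ι, inv_mul_mul_zpow,
      ← zpow_mul]
    congr 1
    group

theorem hex_comp {N₁ N₂ : Subgroup B3} [N₁.Normal] [N₂.Normal] {m₁ m₂ : ℤ} {f₁ f₂ : F2}
    {T₁ : B3 →* B3 ⧸ N₁} {T₂ : B3 →* B3 ⧸ N₂} (hT₁ : IsTmf N₁ m₁ f₁ T₁) (hex₁ : Hex N₁ m₁ f₁)
    (hK : T₁.ker = N₂) (hT₂ : IsTmf N₂ m₂ f₂ T₂) (hex₂ : Hex N₂ m₂ f₂) :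
    Hex N₁ (2 * m₁ * m₂ + m₁ + m₂) (f₁ * Emap m₁ f₁ f₂) := by
  obtain ⟨h₁₂, h₂₁⟩ := hT₁.hex_iff.mp hex₁
  obtain ⟨h₁₂', h₂₁'⟩ := hT₂.hex_iff.mp hex₂
  rw [(hT₁.comp hK hT₂).hex_iff, lift_comp_apply_of_eq_mk' _ h₁₂', lift_comp_apply_of_eq_mk' _ h₂₁',
    mul_assoc (ι f₂)⁻¹ σ₁ σ₂]
  constructor
  · rw [map_mul T₁, map_mul T₁, map_inv, map_zpow, h₁₂, hT₁.map_ι, hT₁.map_σ₁_sq_inv_mul_c hex₁,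
      ← map_zpow, ← map_inv, ← map_mul, ← map_mul, map_mul ι]
    congr 1
    group
  · rw [map_mul T₁, map_mul T₁, map_zpow, h₂₁, hT₁.map_ι, hT₁.map_σ₂_sq_inv_mul_c hex₁,
      ← map_zpow, ← map_mul, ← map_mul, map_mul ι, inv_mul_mul_zpow]
    congr 1
    group

theorem map_emap_le {K : Subgroup B3} (hT : IsTmf N m f T) (hK : T.ker = K) :
    (commutator F2 ⊔ K.comap ι).map (Emap m f) ≤ commutator F2 ⊔ N.comap ι := by
  rw [Subgroup.map_sup]
  refine sup_le_sup ?_ ?_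
  · rw [map_commutator_eq, commutator_def]
    exact Subgroup.commutator_mono le_top le_top
  · rintro _ ⟨w, hw, rfl⟩
    have hTw : T (ι w) = 1 := by rw [← MonoidHom.mem_ker, hK]; exact hw
    rw [hT.map_ι] at hTw
    exact (eq_one_iff (ι (Emap m f w))).mp hTw

theorem map_PB3 (hT : IsTmf N m f T) (hN : N ≤ PB3) (hsurj : Function.Surjective T) :
    PB3.map T = PB3.map (mk' N) := by
  have hN' : N ≤ ρ.ker := hN
  have hρ : (lift N ρ hN').comp T = ρ := by
    refine PresentedGroup.ext fun i => ?_
    fin_cases i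
    · show lift N ρ hN' (T σ₁) = ρ σ₁
      rw [hT.1, mk'_apply, lift_mk, ρ_zpow_two_mul_add_one (ι_xx ▸ ι_mem_PB3 xx)]
    · show lift N ρ hN' (T σ₂) = ρ σ₂
      rw [hT.2, mk'_apply, lift_mk, map_mul, map_mul, map_inv, ι_mem_PB3 f,
        ρ_zpow_two_mul_add_one (ι_yy ▸ ι_mem_PB3 yy), inv_one, one_mul, mul_one]
  calc PB3.map T = ((lift N ρ hN').comp T).ker.map T := by rw [hρ]; rfl
    _ = (lift N ρ hN').ker := by
        rw [← MonoidHom.comap_ker, Subgroup.map_comap_eq_self_of_surjective hsurj]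
    _ = PB3.map (mk' N) := ker_lift _ _ _

theorem exists_commutator_map_eq_inv (hT : IsTmf N m f T) (hN : N ≤ PB3)
    (hsurj : Function.Surjective T) (hf : f ∈ commutator F2 ⊔ N.comap ι) :
    ∃ γ ∈ commutator F2, T (ι γ) = (mk' N (ι f))⁻¹ := by
  obtain ⟨g, hg, l, hl, rfl⟩ := Subgroup.mem_sup_of_normal_right.mp hf
  have hmem : (mk' N (ι (g * l)))⁻¹ ∈ (commutator F2).map ((mk' N).comp ι) := by
    have hl' : mk' N (ι l) = 1 := (eq_one_iff _).mpr hl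
    refine ⟨g⁻¹, inv_mem hg, ?_⟩
    rw [MonoidHom.comp_apply, map_mul ι, map_mul, hl', mul_one, map_inv, map_inv]
  rwa [← commutator_map_PB3 (mk'_surjective N), ← hT.map_PB3 hN hsurj,
    commutator_map_PB3 hsurj] at hmem

theorem inv (hT : IsTmf N m f T) (hsurj : Function.Surjective T) (hker : T.ker = K)
    (hm' : 2 * (Nord N : ℤ) ∣ (2 * m + 1) * (2 * m' + 1) - 1)
    (hf' : T (ι f') = (mk' N (ι f))⁻¹) : IsTmf K m' f' (quotientInvHom hsurj hker) := by
  constructor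
  · rw [quotientInvHom_apply_eq_mk'_iff, map_zpow, hT.1, ← map_zpow, ← zpow_mul, map_zpow,
      zpow_eq_self_of_orderOf_sq_dvd (by rw [← map_pow]; exact orderOf_σ₁_sq_dvd_nord N) hm']
  · rw [quotientInvHom_apply_eq_mk'_iff, map_mul T, map_mul T, map_inv T, hf', inv_inv,
      map_zpow T, hT.2, ← map_zpow, ← map_inv (mk' N), ← map_mul, ← map_mul, inv_mul_mul_zpow,
      ← zpow_mul, show ∀ a b : B3, a * (a⁻¹ * b * a) * a⁻¹ = b from fun a b => by group,
      map_zpow,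
      zpow_eq_self_of_orderOf_sq_dvd (by rw [← map_pow]; exact orderOf_σ₂_sq_dvd_nord N) hm']

theorem hex_inv (hT : IsTmf N m f T) (hex : Hex N m f) (hsurj : Function.Surjective T)
    (hker : T.ker = K) (hm' : 2 * (Nord N : ℤ) ∣ (2 * m + 1) * (2 * m' + 1) - 1)
    (hf' : T (ι f') = (mk' N (ι f))⁻¹) : Hex K m' f' := by
  obtain ⟨h₁₂, h₂₁⟩ := hT.hex_iff.mp hex
  obtain ⟨t, ht⟩ := hm'
  have hs : ((Nord N : ℕ) : ℤ) ∣ m + (2 * m + 1) * m' := ⟨t, by linarith⟩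
  have hu₁ : mk' N ((σ₁ ^ 2)⁻¹ * c) ^ (m + (2 * m + 1) * m') = 1 :=
    orderOf_dvd_iff_zpow_eq_one.mp ((Int.natCast_dvd_natCast.mpr
      (orderOf_sq_inv_mul_c_dvd_nord N (orderOf_σ₁_sq_dvd_nord N))).trans hs)
  have hu₂ : mk' N ((σ₂ ^ 2)⁻¹ * c) ^ (m + (2 * m + 1) * m') = 1 :=
    orderOf_dvd_iff_zpow_eq_one.mp ((Int.natCast_dvd_natCast.mpr
      (orderOf_sq_inv_mul_c_dvd_nord N (orderOf_σ₂_sq_dvd_nord N))).trans hs)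
  rw [(hT.inv hsurj hker ⟨t, ht⟩ hf').hex_iff, quotientInvHom_apply_eq_mk'_iff,
    quotientInvHom_apply_eq_mk'_iff, mul_assoc (ι f')⁻¹ σ₁ σ₂]
  constructor
  · rw [map_mul T, map_mul T, map_inv, map_zpow, hf', inv_inv, h₁₂, hT.map_σ₁_sq_inv_mul_c hex,
      ← mul_one (mk' N (σ₁ * σ₂)), ← hu₁, ← map_zpow, ← map_zpow, ← map_mul, ← map_mul,
      ← map_mul]
    congr 1
    group
  · rw [map_mul T, map_mul T, map_zpow, hf', h₂₁, hT.map_σ₂_sq_inv_mul_c hex,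
      ← mul_one (mk' N (σ₂ * σ₁)), ← hu₂, ← map_zpow, ← map_zpow, ← map_inv (mk' N), ← map_mul,
      ← map_mul, ← map_mul]
    congr 1
    rw [inv_mul_mul_zpow]
    group

end IsTmf

theorem isShadow_iff {K N : Subgroup B3} [N.Normal] {m : ℤ} {f : F2} :
    IsShadow K N m f ↔ Hex N m f ∧ f ∈ commutator F2 ⊔ N.comap ι ∧
      IsUnit ((2 * m + 1 : ℤ) : ZMod (Nord N)) ∧
      ∃ T : B3 →* B3 ⧸ N, IsTmf N m f T ∧ Function.Surjective T ∧ T.ker = K := by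
  simp only [IsShadow, IsTmf, exists_mem_and_inv_mul_mem_iff, and_assoc]

theorem IsShadow.comp {N₁ N₂ N₃ : Subgroup B3} [N₁.Normal] [N₂.Normal] {m₁ m₂ : ℤ} {f₁ f₂ : F2}
    (h₁ : IsShadow N₂ N₁ m₁ f₁) (h₂ : IsShadow N₃ N₂ m₂ f₂) :
    IsShadow N₃ N₁ (2 * m₁ * m₂ + m₁ + m₂) (f₁ * Emap m₁ f₁ f₂) := by
  obtain ⟨hex₁, hc₁, hu₁, T₁, hT₁, hs₁, hk₁⟩ := isShadow_iff.mp h₁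
  obtain ⟨hex₂, hc₂, hu₂, T₂, hT₂, hs₂, hk₂⟩ := isShadow_iff.mp h₂
  refine isShadow_iff.mpr ⟨hT₁.hex_comp hex₁ hk₁ hT₂ hex₂,
    mul_mem hc₁ (hT₁.map_emap_le hk₁ ⟨f₂, hc₂, rfl⟩), ?_, _, hT₁.comp hk₁ hT₂,
    (QuotientGroup.lift_surjective_of_surjective _ _ hs₁ hk₁.ge).comp hs₂, ?_⟩
  · rw [show 2 * (2 * m₁ * m₂ + m₁ + m₂) + 1 = (2 * m₁ + 1) * (2 * m₂ + 1) by ring, Int.cast_mul]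
    exact hu₁.mul (hT₁.nord_eq hex₁ hk₁ hu₁ ▸ hu₂)
  · rw [MonoidHom.ker_comp_of_injective _ _
      ((QuotientGroup.injective_lift_iff _ _ _).mpr hk₁.symm), hk₂]

theorem isShadow_zero_one (N : Subgroup B3) [N.Normal] : IsShadow N N 0 1 := by
  have hT : IsTmf N 0 1 (QuotientGroup.mk' N) := by simp [IsTmf]
  exact isShadow_iff.mpr ⟨hT.hex_iff.mpr (by simp), one_mem _, by simp, _, hT,
    QuotientGroup.mk'_surjective N, QuotientGroup.ker_mk' N⟩

theorem IsTmf.exists_inverse {K N : Subgroup B3} [K.Normal] [N.Normal] {m : ℤ} {f : F2}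
    {T : B3 →* B3 ⧸ N} (hT : IsTmf N m f T) (hN : N ≤ PB3) (hex : Hex N m f)
    (hsurj : Function.Surjective T) (hker : T.ker = K) (hf : f ∈ commutator F2 ⊔ N.comap ι)
    (hu : IsUnit ((2 * m + 1 : ℤ) : ZMod (Nord N))) :
    ∃ (m' : ℤ) (f' : F2), IsShadow N K m' f' ∧
      2 * (Nord N : ℤ) ∣ (2 * m + 1) * (2 * m' + 1) - 1 ∧
      T (ι f') = QuotientGroup.mk' N (ι f)⁻¹ := by
  obtain ⟨m', hm'⟩ := exists_mul_two_mul_add_one_sub_one_dvd hu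
  obtain ⟨f', hf'C, hf'⟩ := hT.exists_commutator_map_eq_inv hN hsurj hf
  have hunit : IsUnit ((2 * m' + 1 : ℤ) : ZMod (Nord N)) := by
    refine IsUnit.of_mul_eq_one_right ((2 * m + 1 : ℤ) : ZMod (Nord N)) ?_
    have h := (ZMod.intCast_eq_intCast_iff_dvd_sub 1 ((2 * m + 1) * (2 * m' + 1)) (Nord N)).mpr
      ((dvd_mul_left _ 2).trans hm')
    push_cast at h ⊢
    exact h.symm
  refine ⟨m', f', isShadow_iff.mpr ⟨hT.hex_inv hex hsurj hker hm' hf',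
    Subgroup.mem_sup_left hf'C, hT.nord_eq hex hker hu ▸ hunit, _, hT.inv hsurj hker hm' hf',
    quotientInvHom_surjective hsurj hker, ker_quotientInvHom hsurj hker⟩, hm',
    by rw [map_inv]; exact hf'⟩

/-- GT-shadows form a groupoid: composition of composable GT-shadows is a GT-shadow,
[0,1] is the identity morphism at every object, and every GT-shadow
[m,f] ∈ GTSh(K,N) has an inverse [m̃,f̃] ∈ GTSh(N,K) determined by
(2m+1)(2m̃+1) ≡ 1 mod 2N_ord and T^{F₂,isom}_{m,f}(f̃ K_{F₂}) = f⁻¹N_{F₂}. -/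
theorem GTSh_groupoid :
    -- composition
    (∀ (N₁ N₂ N₃ : Subgroup B3) [N₁.Normal] [N₂.Normal] [N₃.Normal],
      N₁ ≤ PB3 → N₂ ≤ PB3 → N₃ ≤ PB3 →
      N₁.FiniteIndex → N₂.FiniteIndex → N₃.FiniteIndex →
      ∀ (m₁ m₂ : ℤ) (f₁ f₂ : F2),
        IsShadow N₂ N₁ m₁ f₁ → IsShadow N₃ N₂ m₂ f₂ →
        IsShadow N₃ N₁ (2 * m₁ * m₂ + m₁ + m₂) (f₁ * Emap m₁ f₁ f₂)) ∧
    -- identity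
    (∀ (N : Subgroup B3) [N.Normal], N ≤ PB3 → N.FiniteIndex →
      IsShadow N N 0 1) ∧
    -- inverses
    (∀ (K N : Subgroup B3) [K.Normal] [N.Normal],
      K ≤ PB3 → N ≤ PB3 → K.FiniteIndex → N.FiniteIndex →
      ∀ (m : ℤ) (f : F2) (T : B3 →* B3 ⧸ N),
        Hex N m f →
        T σ₁ = QuotientGroup.mk' N (σ₁ ^ (2 * m + 1)) →
        T σ₂ = QuotientGroup.mk' N ((ι f)⁻¹ * σ₂ ^ (2 * m + 1) * ι f) →
        Function.Surjective T → T.ker = K →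
        (∃ g ∈ commutator F2, g⁻¹ * f ∈ N.comap ι) →
        IsUnit ((2 * m + 1 : ℤ) : ZMod (Nord N)) →
        ∃ (m' : ℤ) (f' : F2),
          IsShadow N K m' f' ∧
          ((2 * (Nord N) : ℤ) ∣ ((2 * m + 1) * (2 * m' + 1) - 1)) ∧
          T (ι f') = QuotientGroup.mk' N (ι f)⁻¹) := by
  refine ⟨fun N₁ N₂ N₃ _ _ _ _ _ _ _ _ _ m₁ m₂ f₁ f₂ h₁ h₂ => h₁.comp h₂,
    fun N _ _ _ => isShadow_zero_one N, ?_⟩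
  intro K N _ _ _ hN _ _ m f T hex h₁ h₂ hsurj hker hcomm hu
  exact IsTmf.exists_inverse ⟨h₁, h₂⟩ hN hex hsurj hker (exists_mem_and_inv_mul_mem_iff.mp hcomm) hu
end

section
/- The intersection of two isolated objects of the groupoid GTSh is again an isolated object of GTSh. -/
/-- An object N of GTSh is isolated if every GT-shadow with target N has kernel N. -/
def IsIsolated (N : Subgroup B3) [N.Normal] : Prop :=
  ∀ (K : Subgroup B3) (m : ℤ) (f : F2), IsShadow K N m f → K = N

/-! A GT-shadow `[m, f]` with target `N ⊓ K`, realised by `T : B₃ → B₃/(N ⊓ K)`, pushes forward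
along `B₃/(N ⊓ K) → B₃/N` and `B₃/(N ⊓ K) → B₃/K` to GT-shadows with targets `N` and `K`; by
isolation their kernels are `N` and `K`. Since `B₃/(N ⊓ K)` embeds into `B₃/N × B₃/K`, the kernel
of `T` is the intersection of these two kernels, namely `N ⊓ K`. -/

open QuotientGroup

theorem orderOf_mk'_dvd_of_le {G : Type*} [Group G] {M N : Subgroup G} [M.Normal] [N.Normal]
    (h : M ≤ N) (x : G) : orderOf (mk' N x) ∣ orderOf (mk' M x) :=
  orderOf_map_dvd (map M N (MonoidHom.id G) h) x

theorem ker_map_inf_left_inf_ker_map_inf_right {G : Type*} [Group G] (N K : Subgroup G)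
    [N.Normal] [K.Normal] :
    (map (N ⊓ K) N (MonoidHom.id G) inf_le_left).ker ⊓
      (map (N ⊓ K) K (MonoidHom.id G) inf_le_right).ker = ⊥ := by
  refine eq_bot_iff.mpr fun q hq => ?_
  induction q using QuotientGroup.induction_on with | H g => ?_
  obtain ⟨hgN, hgK⟩ := Subgroup.mem_inf.mp hq
  exact (eq_one_iff g).mpr ⟨(eq_one_iff g).mp hgN, (eq_one_iff g).mp hgK⟩

theorem isUnit_intCast_of_dvd {m n : ℕ} (hnm : n ∣ m) {a : ℤ} (ha : IsUnit (a : ZMod m)) :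
    IsUnit (a : ZMod n) := by
  simpa only [map_intCast] using ha.map (ZMod.castHom hnm (ZMod n))

section

variable {M N : Subgroup B3} [M.Normal] [N.Normal]

theorem nord_dvd_of_le (h : M ≤ N) : Nord N ∣ Nord M :=
  lcm_dvd_lcm
    (lcm_dvd_lcm (orderOf_mk'_dvd_of_le h _) (orderOf_mk'_dvd_of_le h _))
    (orderOf_mk'_dvd_of_le h _)

theorem Hex.mono {m : ℤ} {f : F2} (hMf : Hex M m f) (h : M ≤ N) : Hex N m f :=
  ⟨congrArg (map M N (MonoidHom.id B3) h) hMf.1, congrArg (map M N (MonoidHom.id B3) h) hMf.2⟩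

theorem isShadow_map_comp_of_le (h : M ≤ N) {m : ℤ} {f : F2} {T : B3 →* B3 ⧸ M}
    (hHex : Hex M m f) (hf : ∃ g ∈ commutator F2, g⁻¹ * f ∈ M.comap ι)
    (hunit : IsUnit ((2 * m + 1 : ℤ) : ZMod (Nord M)))
    (hT₁ : T σ₁ = mk' M (σ₁ ^ (2 * m + 1)))
    (hT₂ : T σ₂ = mk' M ((ι f)⁻¹ * σ₂ ^ (2 * m + 1) * ι f))
    (hT : Function.Surjective T) :
    IsShadow ((map M N (MonoidHom.id B3) h).comp T).ker N m f := by
  obtain ⟨g, hg, hgf⟩ := hf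
  have hmap : Function.Surjective (map M N (MonoidHom.id B3) h) :=
    map_surjective_of_surjective M N (MonoidHom.id B3) mk_surjective h
  refine ⟨hHex.mono h, ⟨g, hg, Subgroup.comap_mono h hgf⟩,
    isUnit_intCast_of_dvd (nord_dvd_of_le h) hunit, _, ?_, ?_, hmap.comp hT, rfl⟩
  · rw [MonoidHom.comp_apply, hT₁]; rfl
  · rw [MonoidHom.comp_apply, hT₂]; rfl

end

theorem inf_isolated_general (N K : Subgroup B3) [N.Normal] [K.Normal]
    (hN : IsIsolated N) (hK : IsIsolated K) :
    IsIsolated (N ⊓ K) := by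
  rintro L m f ⟨hHex, hf, hunit, T, hT₁, hT₂, hT, rfl⟩
  have hTN := hN _ m f (isShadow_map_comp_of_le inf_le_left hHex hf hunit hT₁ hT₂ hT)
  have hTK := hK _ m f (isShadow_map_comp_of_le inf_le_right hHex hf hunit hT₁ hT₂ hT)
  rw [← MonoidHom.comap_ker] at hTN hTK
  rw [← MonoidHom.comap_bot, ← ker_map_inf_left_inf_ker_map_inf_right N K, Subgroup.comap_inf,
    hTN, hTK]

/-- The intersection of two isolated objects of GTSh is again isolated. -/
theorem inf_isolated (N K : Subgroup B3) [N.Normal] [K.Normal]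
    (hNfin : N.FiniteIndex) (hKfin : K.FiniteIndex)
    (hNle : N ≤ PB3) (hKle : K ≤ PB3)
    (hN : IsIsolated N) (hK : IsIsolated K) :
    IsIsolated (N ⊓ K) :=
  inf_isolated_general N K hN hK
end
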